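/- arXiv:1307.2108 — 7 statements merged into one kernel-verified Lean document; each statement's English description precedes it below -/
import Mathlib

section
/- Let F be a group and φ₁, φ₂ ∈ Aut(F), with suspensions G₁ = F ⋊_{φ₁} ℤ and G₂ = F ⋊_{φ₂} ℤ, fibers ι₁(F), ι₂(F) and transverse elements t₁, t₂. Then φ₁ and φ₂ are conjugate in Out(F) if and only if there exists a group isomorphism Ψ : G₁ → G₂ such that Ψ maps the fiber ι₁(F) onto the fiber ι₂(F) and Ψ(t₁) ∈ t₂·ι₂(F) (i.e., Ψ preserves the fiber and the orientation). -/
/-!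
An isomorphism of suspensions preserving fiber and orientation restricts to an automorphism `ψ`
of `F` and sends `t₁` to `t₂ f`; since conjugation by `t` acts on the fiber as `φ`, comparing
`Ψ (t₁ x t₁⁻¹)` with `(t₂ f) ψ(x) (t₂ f)⁻¹` gives `ψ φ₁ = φ₂ (conj f) ψ`. Conversely, `ψ`
identifies `F ⋊_{φ₁} ℤ` with `F ⋊_{ψ φ₁ ψ⁻¹} ℤ`, and `F ⋊_{φ · conj a} ℤ ≅ F ⋊_φ ℤ` by
`t ↦ t a`, because conjugation by `t a` acts on the fiber as `φ ∘ conj a`.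
-/

open SemidirectProduct Multiplicative

theorem MonoidHom.map_range_eq_range_of_comp_eq {F F' G H : Type*} [Group F] [Group F'] [Group G]
    [Group H] {Ψ : G →* H} {i : F →* G} {j : F' →* H} (ψ : F ≃* F')
    (h : Ψ.comp i = j.comp ψ.toMonoidHom) : i.range.map Ψ = j.range := by
  rw [MonoidHom.map_range, h, MonoidHom.range_comp, ψ.toMonoidHom.range_eq_top_of_surjective
    ψ.surjective, ← MonoidHom.range_eq_map]

theorem MulEquiv.exists_comp_eq_of_map_range_eq {F F' G H : Type*} [Group F] [Group F'] [Group G]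
    [Group H] (Ψ : G ≃* H) {i : F →* G} {j : F' →* H} (hi : Function.Injective i)
    (hj : Function.Injective j) (h : i.range.map Ψ.toMonoidHom = j.range) :
    ∃ ψ : F ≃* F', ∀ x, j (ψ x) = Ψ (i x) :=
  ⟨(MonoidHom.ofInjective hi).trans <| (Ψ.subgroupMap i.range).trans <|
      (MulEquiv.subgroupCongr h).trans (MonoidHom.ofInjective hj).symm,
    fun _ => MonoidHom.apply_ofInjective_symm hj _⟩

theorem MonoidHom.map_zpow_apply_of_map_apply_eq_conj {F G : Type*} [Group F] [Group G]
    (f : F →* G) {φ : MulAut F} {c : G} (h : ∀ x, f (φ x) = c * f x * c⁻¹) (n : ℤ) (x : F) :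
    f ((φ ^ n) x) = c ^ n * f x * (c ^ n)⁻¹ := by
  induction n using Int.induction_on generalizing x with
  | zero => simp
  | succ k ih => rw [zpow_add_one, MulAut.mul_apply, ih, h, zpow_add_one]; group
  | pred k ih =>
    have h_inv : f (φ⁻¹ x) = c⁻¹ * f x * c := by
      have := h (φ⁻¹ x)
      rw [MulAut.apply_inv_self] at this
      rw [this]; group
    rw [zpow_sub_one, MulAut.mul_apply, ih, h_inv, zpow_sub_one]; group

abbrev Suspension {F : Type*} [Group F] (φ : MulAut F) :=
  F ⋊[zpowersHom (MulAut F) φ] Multiplicative ℤ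

namespace Suspension

variable {F G : Type*} [Group F] [Group G]

def t (φ : MulAut F) : Suspension φ := inr (ofAdd 1)

variable {φ : MulAut F}

theorem inl_apply (x : F) : (inl (φ x) : Suspension φ) = t φ * inl x * (t φ)⁻¹ := by
  simpa [t] using inl_aut (φ := zpowersHom (MulAut F) φ) (ofAdd 1) x

theorem hom_ext {Φ Φ' : Suspension φ →* G} (hl : Φ.comp inl = Φ'.comp inl)
    (ht : Φ (t φ) = Φ' (t φ)) : Φ = Φ' :=
  SemidirectProduct.hom_ext hl (MonoidHom.ext_mint ht)

def lift (f : F →* G) (c : G) (h : ∀ x, f (φ x) = c * f x * c⁻¹) : Suspension φ →* G :=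
  SemidirectProduct.lift f (zpowersHom G c) fun n => MonoidHom.ext fun x => by
    simp only [MonoidHom.comp_apply, MulEquiv.coe_toMonoidHom, zpowersHom_apply,
      MulAut.conj_apply]
    exact f.map_zpow_apply_of_map_apply_eq_conj h n.toAdd x

@[simp]
theorem lift_inl (f : F →* G) (c : G) (h : ∀ x, f (φ x) = c * f x * c⁻¹) (x : F) :
    lift f c h (inl x) = f x :=
  SemidirectProduct.lift_inl ..

@[simp]
theorem lift_t (f : F →* G) (c : G) (h : ∀ x, f (φ x) = c * f x * c⁻¹) :
    lift f c h (t φ) = c := by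
  simp [lift, t]

variable (φ) in
def mulConjEquiv (a : F) : Suspension (φ * MulAut.conj a) ≃* Suspension φ :=
  MonoidHom.toMulEquiv
    (lift inl (t φ * inl a) fun x => by
      rw [MulAut.mul_apply, MulAut.conj_apply, inl_apply]
      simp only [map_mul, map_inv]
      group)
    (lift inl (t (φ * MulAut.conj a) * inl a⁻¹) fun x => by
      have hx : φ x = (φ * MulAut.conj a) (a⁻¹ * x * a) := by
        rw [MulAut.mul_apply, MulAut.conj_apply]
        congr 1
        group
      rw [hx, inl_apply]
      simp only [map_mul, map_inv]
      group)
    (hom_ext (MonoidHom.ext fun x => by simp) (by simp))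
    (hom_ext (MonoidHom.ext fun x => by simp) (by simp))

@[simp]
theorem mulConjEquiv_inl (a x : F) : mulConjEquiv φ a (inl x) = inl x := by
  simp [mulConjEquiv]

@[simp]
theorem mulConjEquiv_t (a : F) : mulConjEquiv φ a (t (φ * MulAut.conj a)) = t φ * inl a := by
  simp [mulConjEquiv]

def congrOfSemiconjBy {φ₁ φ₂ : MulAut F} (ψ : MulAut F) (h : SemiconjBy ψ φ₁ φ₂) :
    Suspension φ₁ ≃* Suspension φ₂ :=
  SemidirectProduct.congr ψ (MulEquiv.refl _) fun n => by
    simpa [MulAut.mul_def] using (h.zpow_right n.toAdd).eq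

@[simp]
theorem congrOfSemiconjBy_inl {φ₁ φ₂ : MulAut F} (ψ : MulAut F) (h : SemiconjBy ψ φ₁ φ₂)
    (x : F) : congrOfSemiconjBy ψ h (inl x) = inl (ψ x) := by
  ext <;> simp [congrOfSemiconjBy]

@[simp]
theorem congrOfSemiconjBy_t {φ₁ φ₂ : MulAut F} (ψ : MulAut F) (h : SemiconjBy ψ φ₁ φ₂) :
    congrOfSemiconjBy ψ h (t φ₁) = t φ₂ := by
  ext <;> simp [congrOfSemiconjBy, t]

theorem exists_equiv_of_apply_eq_apply_conj {φ₁ φ₂ : MulAut F} (ψ : MulAut F) (a : F)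
    (h : ∀ x, ψ (φ₁ x) = φ₂ (a⁻¹ * ψ x * a)) :
    ∃ Ψ : Suspension φ₁ ≃* Suspension φ₂,
      (∀ x, Ψ (inl x) = inl (ψ x)) ∧ Ψ (t φ₁) = t φ₂ * inl a⁻¹ := by
  have hψ : SemiconjBy ψ φ₁ (φ₂ * MulAut.conj a⁻¹) := MulEquiv.ext fun x => by
    simp [h]
  exact ⟨(congrOfSemiconjBy ψ hψ).trans (mulConjEquiv φ₂ a⁻¹), by simp, by simp⟩

theorem apply_apply_eq_of_map_inl_of_map_t {φ₁ φ₂ : MulAut F}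
    (Φ : Suspension φ₁ →* Suspension φ₂) {ψ : F → F} {a : F}
    (hl : ∀ x, Φ (inl x) = inl (ψ x)) (ht : Φ (t φ₁) = t φ₂ * inl a) (x : F) :
    ψ (φ₁ x) = φ₂ (a * ψ x * a⁻¹) := by
  apply inl_injective (φ := zpowersHom (MulAut F) φ₂)
  rw [← hl, inl_apply, inl_apply, map_mul, map_mul, map_inv, ht, hl]
  simp only [map_mul, map_inv]
  group

end Suspension

/-- Two automorphisms of `F` are conjugate in `Out(F)` if and only if there is an
isomorphism of the suspensions mapping the fiber onto the fiber and preserving the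
orientation (`Ψ t₁ ∈ t₂ · ι₂(F)`). -/
theorem conj_out_iff_fiber_orientation_preserving_iso
    {F : Type*} [Group F] (φ₁ φ₂ : MulAut F) :
    let G₁ := F ⋊[zpowersHom (MulAut F) φ₁] Multiplicative ℤ
    let G₂ := F ⋊[zpowersHom (MulAut F) φ₂] Multiplicative ℤ
    let ι₁ : F →* G₁ := SemidirectProduct.inl
    let ι₂ : F →* G₂ := SemidirectProduct.inl
    let t₁ : G₁ := SemidirectProduct.inr (Multiplicative.ofAdd 1)
    let t₂ : G₂ := SemidirectProduct.inr (Multiplicative.ofAdd 1)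
    ((∃ (ψ : MulAut F) (f₀ : F), ∀ f : F, ψ (φ₁ f) = φ₂ (f₀⁻¹ * ψ f * f₀)) ↔
      ∃ Ψ : G₁ ≃* G₂, Subgroup.map Ψ.toMonoidHom ι₁.range = ι₂.range ∧
        ∃ f : F, Ψ t₁ = t₂ * ι₂ f) := by
  intro G₁ G₂ ι₁ ι₂ t₁ t₂
  constructor
  · rintro ⟨ψ, f₀, h⟩
    obtain ⟨Ψ, hl, ht⟩ := Suspension.exists_equiv_of_apply_eq_apply_conj ψ f₀ h
    exact ⟨Ψ, MonoidHom.map_range_eq_range_of_comp_eq ψ (MonoidHom.ext hl), f₀⁻¹, ht⟩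
  · rintro ⟨Ψ, hrange, f, ht⟩
    obtain ⟨ψ, hψ⟩ := Ψ.exists_comp_eq_of_map_range_eq inl_injective inl_injective hrange
    refine ⟨ψ, f⁻¹, fun x => ?_⟩
    simpa using Suspension.apply_apply_eq_of_map_inl_of_map_t Ψ.toMonoidHom
      (fun x => (hψ x).symm) ht x
end

section
/- Let F be a group and φ₁, φ₂ ∈ Aut(F), with suspensions G₁ = F ⋊_{φ₁} ℤ and G₂ = F ⋊_{φ₂} ℤ and fibers ι₁(F), ι₂(F). If Ψ : G₁ → G₂ is a group isomorphism with Ψ(ι₁(F)) ≤ ι₂(F) (the fiber is sent inside the fiber), then Ψ(ι₁(F)) = ι₂(F) (the fiber is sent onto the fiber). -/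
/-!
Both fibers are kernels of the projection to `ℤ`, and this projection splits. Hence an
isomorphism `Ψ` sending fiber into fiber descends to an endomorphism `f` of `ℤ` with
`f ∘ π₁ = π₂ ∘ Ψ`; `f` is surjective because `Ψ` is, hence injective because `ℤ` is Hopfian,
so `Ψ⁻¹(ker π₂) = ker (f ∘ π₁) = ker π₁`.
-/

open SemidirectProduct

theorem Int.injective_of_surjective_monoidHom (f : Multiplicative ℤ →* Multiplicative ℤ)
    (hf : Function.Surjective f) : Function.Injective f :=
  IsNoetherian.injective_of_surjective_endomorphism (MonoidHom.toAdditive f).toIntLinearMap hf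

theorem MonoidHom.eq_comp_section_comp_of_ker_le {G Q P : Type*} [Group G] [Group Q] [Group P]
    (π : G →* Q) (s : Q →* G) (hs : π.comp s = .id Q) (φ : G →* P) (hφ : π.ker ≤ φ.ker) :
    φ = (φ.comp s).comp π := by
  ext g
  have hg : g * s (π g)⁻¹ ∈ π.ker := by
    simp [MonoidHom.mem_ker, ← MonoidHom.comp_apply π s, hs]
  calc φ g = φ (g * s (π g)⁻¹) * φ (s (π g)) := by
        rw [← map_mul, map_inv, inv_mul_cancel_right]
    _ = φ (s (π g)) := by rw [hφ hg, one_mul]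

theorem Subgroup.map_ker_eq_ker_of_map_ker_le {G H Q : Type*} [Group G] [Group H] [Group Q]
    (hQ : ∀ f : Q →* Q, Function.Surjective f → Function.Injective f)
    (e : G ≃* H) (π : G →* Q) (s : Q →* G) (hs : π.comp s = .id Q)
    (ρ : H →* Q) (hρ : Function.Surjective ρ) (h : π.ker.map e.toMonoidHom ≤ ρ.ker) :
    π.ker.map e.toMonoidHom = ρ.ker := by
  set f := (ρ.comp e.toMonoidHom).comp s
  have hcomm : ρ.comp e.toMonoidHom = f.comp π := by
    refine MonoidHom.eq_comp_section_comp_of_ker_le π s hs _ ?_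
    rwa [← MonoidHom.comap_ker, ← map_le_iff_le_comap]
  have hf : Function.Injective f := by
    refine hQ f fun q => ?_
    obtain ⟨y, rfl⟩ := hρ q
    refine ⟨π (e.symm y), ?_⟩
    rw [← MonoidHom.comp_apply, ← hcomm, MonoidHom.comp_apply, MulEquiv.coe_toMonoidHom,
      MulEquiv.apply_symm_apply]
  rw [← MonoidHom.ker_comp_of_injective π f hf, ← hcomm, ← MonoidHom.comap_ker,
    map_comap_eq_self_of_surjective e.surjective]

/-- If an isomorphism of suspensions sends the fiber inside the fiber, then it sends
the fiber onto the fiber. -/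
theorem fiber_into_fiber_implies_onto
    {F : Type*} [Group F] (φ₁ φ₂ : MulAut F) :
    let G₁ := F ⋊[zpowersHom (MulAut F) φ₁] Multiplicative ℤ
    let G₂ := F ⋊[zpowersHom (MulAut F) φ₂] Multiplicative ℤ
    let ι₁ : F →* G₁ := SemidirectProduct.inl
    let ι₂ : F →* G₂ := SemidirectProduct.inl
    ∀ Ψ : G₁ ≃* G₂,
      Subgroup.map Ψ.toMonoidHom ι₁.range ≤ ι₂.range →
      Subgroup.map Ψ.toMonoidHom ι₁.range = ι₂.range := by
  intro G₁ G₂ ι₁ ι₂ Ψ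
  simp only [ι₁, ι₂]
  rw [range_inl_eq_ker_rightHom, range_inl_eq_ker_rightHom]
  exact Subgroup.map_ker_eq_ker_of_map_ker_le Int.injective_of_surjective_monoidHom Ψ rightHom
    inr rightHom_comp_inr rightHom rightHom_surjective
end

section
/- Let F be a group and φ₁, φ₂ ∈ Aut(F), with suspensions G₁ = F ⋊_{φ₁} ℤ and G₂ = F ⋊_{φ₂} ℤ, fibers ι₁(F), ι₂(F) and transverse elements t₁, t₂. Let Ψ : G₁ → G₂ be a group isomorphism whose induced map on abelianizations sends the image of ι₁(F) into the image of ι₂(F) and sends the class of t₁ into (class of t₂)·(image of ι₂(F)). Then Ψ(ι₁(F)) = ι₂(F) and Ψ(t₁) ∈ t₂·ι₂(F). -/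
/-!
The projection `rightHom : F ⋊ ℤ →* ℤ` has kernel the fiber and factors through the
abelianization, so the hypotheses say that `rightHom ∘ Ψ` kills `ι₁(F)` and sends `t₁` to the
generator. As `G₁` is generated by `ι₁(F)` and `t₁`, this forces `rightHom ∘ Ψ = rightHom`;
hence `Ψ` maps one kernel onto the other, and `Ψ t₁` lies in the preimage of the generator,
the coset `t₂ ι₂(F)`.
-/

open SemidirectProduct

theorem Abelianization.lift_eq_one_of_mem_map_of {G A : Type*} [Group G] [CommGroup A]
    (π : G →* A) {K : Subgroup G} (hK : K ≤ π.ker) {x : Abelianization G}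
    (hx : x ∈ K.map of) : lift π x = 1 := by
  obtain ⟨g, hg, rfl⟩ := hx
  simpa using hK hg

namespace SemidirectProduct

theorem eq_inr_right_mul_inl {N G : Type*} [Group N] [Group G] {φ : G →* MulAut N}
    (g : N ⋊[φ] G) : g = inr g.right * inl ((φ g.right)⁻¹ g.left) := by
  ext <;> simp

theorem eq_rightHom_of_map_inl_of_map_inr_ofAdd_one {N : Type*} [Group N]
    {φ : Multiplicative ℤ →* MulAut N} (χ : N ⋊[φ] Multiplicative ℤ →* Multiplicative ℤ)
    (hinl : ∀ n, χ (inl n) = 1) (hinr : χ (inr (.ofAdd 1)) = .ofAdd 1) : χ = rightHom :=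
  hom_ext (MonoidHom.ext fun n => by simp [hinl])
    (MonoidHom.ext_mint (by simp [hinr]))

end SemidirectProduct

/-- If an isomorphism of suspensions induces, on abelianizations, a map sending the
image of the fiber into the image of the fiber and the class of `t₁` into
`(class of t₂)·(image of the fiber)`, then the isomorphism itself maps the fiber onto
the fiber and satisfies `Ψ t₁ ∈ t₂ · ι₂(F)`. -/
theorem abelianized_conditions_give_fiber_orientation_preservation
    {F : Type*} [Group F] (φ₁ φ₂ : MulAut F) :
    let G₁ := F ⋊[zpowersHom (MulAut F) φ₁] Multiplicative ℤ
    let G₂ := F ⋊[zpowersHom (MulAut F) φ₂] Multiplicative ℤ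
    let ι₁ : F →* G₁ := SemidirectProduct.inl
    let ι₂ : F →* G₂ := SemidirectProduct.inl
    let t₁ : G₁ := SemidirectProduct.inr (Multiplicative.ofAdd 1)
    let t₂ : G₂ := SemidirectProduct.inr (Multiplicative.ofAdd 1)
    ∀ Ψ : G₁ ≃* G₂,
      Subgroup.map (Abelianization.map Ψ.toMonoidHom)
          (Subgroup.map Abelianization.of ι₁.range) ≤
        Subgroup.map Abelianization.of ι₂.range →
      (∃ x ∈ Subgroup.map Abelianization.of ι₂.range,
        Abelianization.map Ψ.toMonoidHom (Abelianization.of t₁) =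
          Abelianization.of t₂ * x) →
      Subgroup.map Ψ.toMonoidHom ι₁.range = ι₂.range ∧ ∃ f : F, Ψ t₁ = t₂ * ι₂ f := by
  intro G₁ G₂ ι₁ ι₂ t₁ t₂ Ψ hfiber ht
  have hker : ∀ {x}, x ∈ ι₂.range.map Abelianization.of → Abelianization.lift rightHom x = 1 :=
    Abelianization.lift_eq_one_of_mem_map_of rightHom range_inl_eq_ker_rightHom.le
  have hΨ : rightHom.comp Ψ.toMonoidHom = rightHom := by
    refine eq_rightHom_of_map_inl_of_map_inr_ofAdd_one _ (fun f => ?_) ?_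
    · simpa using hker (hfiber ⟨_, ⟨ι₁ f, ⟨f, rfl⟩, rfl⟩, rfl⟩)
    · obtain ⟨x, hx, hΨt⟩ := ht
      simpa [hker hx, t₂] using congrArg (Abelianization.lift rightHom) hΨt
  constructor
  · rw [range_inl_eq_ker_rightHom, range_inl_eq_ker_rightHom, ← hΨ, ← MonoidHom.comap_ker,
      Subgroup.map_comap_eq_self_of_surjective Ψ.surjective]
  · have hright : (Ψ t₁).right = .ofAdd 1 :=
      (DFunLike.congr_fun hΨ t₁).trans (rightHom_inr _)
    exact ⟨_, hright ▸ eq_inr_right_mul_inl (Ψ t₁)⟩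
end

section
/- Let G be a group, F a normal subgroup of G, and t ∈ G such that every element of G can be written uniquely as f·t^k with f ∈ F and k ∈ ℤ. Let G act on a set X and let v ∈ X. Suppose there exist an integer m > 0 and γ' ∈ F with (γ'·t^m)·v = v; let n be the least such positive integer and fix γ ∈ F with (γ·t^n)·v = v. Then the stabilizer of v in G equals the set of elements f·(γ·t^n)^k with k ∈ ℤ and f ∈ F satisfying f·v = v. That is, Stab_G(v) is generated by Stab_F(v) := F ∩ Stab_G(v) together with γ·t^n; moreover γ·t^n normalizes Stab_F(v), so Stab_G(v) is the suspension Stab_F(v) ⋊ ⟨γ·t^n⟩ of Stab_F(v). -/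
/-!
Uniqueness of the normal form `f * t ^ k` identifies `G ⧸ F` with `ℤ`, so there is a
homomorphism `φ : G → ℤ` with kernel `F` and `φ t = 1`. By minimality of `n`, the least positive
value of `φ` on `Stab_G(v)` is `n = φ (γ * t ^ n)`; dividing `φ g` by `n` with remainder `r`, the
element `g * (γ * t ^ n) ^ (-q)` of `Stab_G(v)` has `φ`-value `0 ≤ r < n`, hence `r = 0` and it
lies in `Stab_G(v) ∩ ker φ = Stab_F(v)`.
-/

open Multiplicative

section

variable {G : Type*} [Group G]

theorem zpowersHom_quotient_bijective (F : Subgroup G) [F.Normal] (t : G)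
    (huniq : ∀ g : G, ∃! p : F × ℤ, g = (p.1 : G) * t ^ p.2) :
    Function.Bijective (zpowersHom (G ⧸ F) (t : G ⧸ F)) := by
  refine ⟨(injective_iff_map_eq_one _).mpr fun k hk => ?_, fun x => ?_⟩
  · have htk : t ^ k.toAdd ∈ F := by
      rwa [zpowersHom_apply, ← QuotientGroup.mk_zpow, QuotientGroup.eq_one_iff] at hk
    have := (huniq (t ^ k.toAdd)).unique (y₁ := (⟨_, htk⟩, 0)) (y₂ := (1, k.toAdd))
      (by simp) (by simp)
    simpa using (congrArg Prod.snd this).symm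
  · obtain ⟨g, rfl⟩ := QuotientGroup.mk_surjective x
    obtain ⟨⟨f, k⟩, hg, -⟩ := huniq g
    refine ⟨ofAdd k, ?_⟩
    rw [hg, zpowersHom_apply, toAdd_ofAdd, QuotientGroup.mk_mul,
      (QuotientGroup.eq_one_iff _).mpr f.2, one_mul, QuotientGroup.mk_zpow]

theorem exists_monoidHom_ker_eq_of_existsUnique_mul_zpow (F : Subgroup G) [F.Normal] (t : G)
    (huniq : ∀ g : G, ∃! p : F × ℤ, g = (p.1 : G) * t ^ p.2) :
    ∃ φ : G →* Multiplicative ℤ, φ.ker = F ∧ φ t = ofAdd 1 := by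
  let e := MulEquiv.ofBijective _ (zpowersHom_quotient_bijective F t huniq)
  refine ⟨(e.symm : G ⧸ F →* Multiplicative ℤ).comp (QuotientGroup.mk' F), ?_, ?_⟩
  · rw [MonoidHom.ker_mulEquiv_comp, QuotientGroup.ker_mk']
  · simp [e, MulEquiv.symm_apply_eq]

theorem exists_mem_inf_ker_mul_zpow (φ : G →* Multiplicative ℤ) {H : Subgroup G} {s : G}
    (hs : s ∈ H) {n : ℤ} (hn : 0 < n) (hφs : φ s = ofAdd n)
    (hmin : ∀ h ∈ H, 0 < (φ h).toAdd → n ≤ (φ h).toAdd) {g : G} (hg : g ∈ H) :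
    ∃ k : ℤ, ∃ f ∈ H ⊓ φ.ker, g = f * s ^ k := by
  set q := (φ g).toAdd / n
  have hf : g * (s ^ q)⁻¹ ∈ H := H.mul_mem hg (H.inv_mem (H.zpow_mem hs q))
  have hφf : (φ (g * (s ^ q)⁻¹)).toAdd = (φ g).toAdd % n := by
    simp [hφs, Int.emod_def, q, sub_eq_add_neg, mul_comm]
  have hr : (φ g).toAdd % n = 0 := by
    by_contra hne
    have := hmin _ hf (hφf ▸ (Int.emod_nonneg _ hn.ne').lt_of_ne' hne)
    exact (Int.emod_lt_of_pos _ hn).not_ge (hφf ▸ this)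
  refine ⟨q, _, Subgroup.mem_inf.mpr ⟨hf, ?_⟩, (inv_mul_cancel_right g _).symm⟩
  rw [MonoidHom.mem_ker, ← toAdd_eq_zero, hφf, hr]

end

/-- Let `G = F ⋊ ⟨t⟩` (every element of `G` is uniquely `f * t ^ k` with `f ∈ F`,
`k ∈ ℤ`, `F` normal) act on a set `X`, and let `v ∈ X`. Suppose some `γ' * t ^ m`
with `γ' ∈ F`, `m > 0` fixes `v`; let `n` be the least such positive integer and
`γ ∈ F` with `(γ * t ^ n) • v = v`. Then the stabilizer of `v` in `G` consists
exactly of the elements `f * (γ * t ^ n) ^ k` with `k ∈ ℤ` and `f ∈ F` fixing `v`;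
moreover `γ * t ^ n` normalizes `F ⊓ Stab_G(v)`, so `Stab_G(v)` is the suspension
of `Stab_F(v)` by `γ * t ^ n`. -/
theorem stabilizer_is_suspension
    {G : Type*} [Group G] (F : Subgroup G) [F.Normal] (t : G)
    (huniq : ∀ g : G, ∃! p : F × ℤ, g = (p.1 : G) * t ^ p.2)
    {X : Type*} [MulAction G X] (v : X)
    (n : ℤ) (hn : 0 < n)
    (hleast : ∀ m : ℤ, 0 < m → (∃ γ' ∈ F, (γ' * t ^ m) • v = v) → n ≤ m)
    (γ : G) (hγ : γ ∈ F) (hfix : (γ * t ^ n) • v = v) :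
    (∀ g : G, g ∈ MulAction.stabilizer G v ↔
      ∃ (k : ℤ) (f : G), f ∈ F ∧ f • v = v ∧ g = f * (γ * t ^ n) ^ k) ∧
    γ * t ^ n ∈ Subgroup.normalizer ((F ⊓ MulAction.stabilizer G v : Subgroup G) : Set G) := by
  obtain ⟨φ, hker, hφt⟩ := exists_monoidHom_ker_eq_of_existsUnique_mul_zpow F t huniq
  have hs : γ * t ^ n ∈ MulAction.stabilizer G v := hfix
  have hφtk (k : ℤ) : φ (t ^ k) = ofAdd k := by
    rw [map_zpow, hφt, ← ofAdd_zsmul, smul_eq_mul, mul_one]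
  have hφs : φ (γ * t ^ n) = ofAdd n := by
    rw [map_mul, MonoidHom.mem_ker.mp (hker ▸ hγ), hφtk, one_mul]
  have hmin : ∀ h ∈ MulAction.stabilizer G v, 0 < (φ h).toAdd → n ≤ (φ h).toAdd := by
    refine fun h hh hpos => hleast _ hpos ⟨h * (t ^ (φ h).toAdd)⁻¹, ?_, by simpa using hh⟩
    rw [← hker, MonoidHom.mem_ker, map_mul, map_inv, hφtk, ofAdd_toAdd, mul_inv_cancel]
  refine ⟨fun g => ⟨fun hg => ?_, ?_⟩, ?_⟩
  · obtain ⟨k, f, ⟨hfv, hfF⟩, rfl⟩ := exists_mem_inf_ker_mul_zpow φ hs hn hφs hmin hg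
    exact ⟨k, f, hker ▸ hfF, hfv, rfl⟩
  · rintro ⟨k, f, -, hfv, rfl⟩
    exact mul_mem hfv (zpow_mem hs k)
  · exact Subgroup.inf_normalizer_le_normalizer_inf
      ⟨Subgroup.normalizer_eq_top (H := F) ▸ Subgroup.mem_top _, Subgroup.le_normalizer hs⟩
end

section
/- Let H and Q be groups and π : H → Q a surjective group homomorphism with finite kernel K. Suppose Q₀ is a subgroup of Q of finite index that is a free group. Then H has a subgroup H₀ of finite index that is a free group, and the index of H₀ in H can be taken to equal |K| · [Q : Q₀]. -/
/-!
Restricting `π` to `π⁻¹(Q₀)` gives an epimorphism onto `Q₀` with kernel `ker π`. Since `Q₀` is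
free, this epimorphism splits, and the image of a splitting is a free complement of `ker π` in
`π⁻¹(Q₀)`. Its index is therefore `|ker π|` in `π⁻¹(Q₀)`, and `|ker π| · [Q : Q₀]` in `H`.
-/

namespace IsFreeGroup

variable {F G : Type*} [Group F] [Group G] [IsFreeGroup F]

theorem exists_rightInverse_of_surjective (f : G →* F) (hf : Function.Surjective f) :
    ∃ s : F →* G, Function.RightInverse s f := by
  choose lift_gen hlift_gen using fun x : Generators F => hf (of x)
  refine ⟨lift lift_gen, fun y => DFunLike.congr_fun (?_ : f.comp (lift lift_gen) = .id F) y⟩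
  exact ext_hom fun x => by simp [hlift_gen]

theorem range_of_injective {s : F →* G} (hs : Function.Injective s) : IsFreeGroup s.range :=
  ofMulEquiv (MonoidHom.ofInjective hs)

end IsFreeGroup

namespace MonoidHom

variable {G F : Type*} [Group G] [Group F]

theorem isComplement'_ker_range_of_rightInverse {f : G →* F} {s : F →* G}
    (hs : Function.RightInverse s f) : Subgroup.IsComplement' f.ker s.range := by
  refine Subgroup.isComplement'_of_disjoint_and_mul_eq_univ ?_ ?_
  · rw [disjoint_iff_inf_le]
    rintro _ ⟨hx, y, rfl⟩
    have hy : y = 1 := by rw [← hs y]; exact hx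
    simp [hy]
  · refine Set.eq_univ_of_forall fun g => ⟨g * (s (f g))⁻¹, ?_, s (f g), ⟨f g, rfl⟩, by group⟩
    simp [mem_ker, hs (f g)]

theorem index_range_of_rightInverse {f : G →* F} {s : F →* G}
    (hs : Function.RightInverse s f) : s.range.index = Nat.card f.ker :=
  (isComplement'_ker_range_of_rightInverse hs).index_eq_card

theorem ker_subgroupComap (f : G →* F) (K : Subgroup F) :
    (f.subgroupComap K).ker = f.ker.subgroupOf (K.comap f) := by
  ext x
  rw [mem_ker, Subgroup.mem_subgroupOf, mem_ker, ← Subtype.val_inj]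
  rfl

theorem card_ker_subgroupComap (f : G →* F) (K : Subgroup F) :
    Nat.card (f.subgroupComap K).ker = Nat.card f.ker := by
  rw [ker_subgroupComap]
  refine Nat.card_congr (Subgroup.subgroupOfEquivOfLe fun x hx => ?_).toEquiv
  simp [mem_ker.mp hx]

end MonoidHom

/-- If `π : H → Q` is surjective with finite kernel and `Q₀ ≤ Q` is a free subgroup of
finite index, then `H` has a free subgroup `H₀` of finite index, with
`[H : H₀] = |ker π| · [Q : Q₀]`. -/
theorem virtually_free_lifts_through_finite_kernel
    {H Q : Type*} [Group H] [Group Q] (π : H →* Q)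
    (hsurj : Function.Surjective π) (hker : Finite π.ker)
    (Q₀ : Subgroup Q) (hQ₀fi : Q₀.FiniteIndex) (hQ₀free : IsFreeGroup Q₀) :
    ∃ H₀ : Subgroup H, H₀.FiniteIndex ∧ IsFreeGroup H₀ ∧
      H₀.index = Nat.card π.ker * Q₀.index := by
  obtain ⟨s, hs⟩ := IsFreeGroup.exists_rightInverse_of_surjective (π.subgroupComap Q₀)
    (π.subgroupComap_surjective_of_surjective Q₀ hsurj)
  have hindex : ((Q₀.comap π).subtype.comp s).range.index = Nat.card π.ker * Q₀.index := by
    rw [MonoidHom.range_comp, Subgroup.index_map_subtype, MonoidHom.index_range_of_rightInverse hs,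
      MonoidHom.card_ker_subgroupComap, Subgroup.index_comap_of_surjective Q₀ hsurj]
  refine ⟨_, ⟨?_⟩, IsFreeGroup.range_of_injective (Subtype.val_injective.comp hs.injective),
    hindex⟩
  rw [hindex]
  exact mul_ne_zero Nat.card_pos.ne' hQ₀fi.index_ne_zero
end

section
/- Let F be a free group and N a finitely generated normal subgroup of F. Then either N is trivial or N has finite index in F. -/
/-!
In rank at least two, a nontrivial element of `N` can be conjugated, first by a suitable letter
and then by `g`, without any cancellation; so the reduced word of every `g` is a prefix of the
reduced word of some `w ∈ N`. Writing `w` as a product of generators of `N` and their inverses, such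
a prefix equals in the group a product of some of those generators followed by a prefix of the
reduced word of one more. Hence `g` lies in `N * p` for one of finitely many elements `p`, and `N`
has finite index. In rank at most one the group is cyclic.
-/

theorem List.finite_setOf_prefix {β : Type*} (l : List β) : {r | r <+: l}.Finite :=
  l.inits.finite_toSet.subset fun r hr => (List.mem_inits r l).mpr hr

theorem Subgroup.FG.map {G G' : Type*} [Group G] [Group G'] {H : Subgroup G} (hH : H.FG)
    (f : G →* G') : (H.map f).FG := by
  classical
  obtain ⟨S, rfl⟩ := hH
  exact ⟨S.image f, by rw [Finset.coe_image, MonoidHom.map_closure]⟩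

theorem Subgroup.finiteIndex_of_isCyclic {G : Type*} [Group G] [IsCyclic G] {N : Subgroup G}
    [N.Normal] (hN : N ≠ ⊥) : N.FiniteIndex := by
  obtain ⟨g, hg⟩ := IsCyclic.exists_generator (α := G)
  obtain ⟨x, hxN, hx⟩ := N.bot_or_exists_ne_one.resolve_left hN
  obtain ⟨k, rfl⟩ := mem_zpowers_iff.mp (hg x)
  have hk : k ≠ 0 := by rintro rfl; exact hx (zpow_zero g)
  have hgen (q : G ⧸ N) : q ∈ zpowers (g : G ⧸ N) := QuotientGroup.induction_on q fun y => by
    obtain ⟨m, rfl⟩ := mem_zpowers_iff.mp (hg y)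
    exact ⟨m, (QuotientGroup.mk_zpow N g m).symm⟩
  have hfin : IsOfFinOrder (g : G ⧸ N) :=
    isOfFinOrder_iff_zpow_eq_one.mpr ⟨k, hk, (QuotientGroup.eq_one_iff _).mpr hxN⟩
  exact ⟨by rw [index, ← orderOf_eq_card_of_forall_mem_zpowers hgen]; exact hfin.orderOf_pos.ne'⟩

namespace FreeGroup

variable {α : Type*}

theorem fst_eq_imp_snd_eq_iff_ne {a b : α × Bool} :
    (a.1 = b.1 → a.2 = b.2) ↔ b ≠ (a.1, !a.2) := by
  obtain ⟨a1, a2⟩ := a; obtain ⟨b1, b2⟩ := b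
  cases a2 <;> cases b2 <;> simp [eq_comm]

theorem head?_invRev (l : List (α × Bool)) :
    (invRev l).head? = l.getLast?.map fun x => (x.1, !x.2) := by
  rw [invRev, List.head?_reverse, List.getLast?_map]

theorem exists_ne_ne_ne [Nontrivial α] (v₁ v₂ v₃ : α × Bool) :
    ∃ z, z ≠ v₁ ∧ z ≠ v₂ ∧ z ≠ v₃ := by
  classical
  obtain ⟨a, b, hab⟩ := exists_pair_ne α
  have hcard : ({v₁, v₂, v₃} : Finset (α × Bool)).card <
      ({(a, true), (a, false), (b, true), (b, false)} : Finset (α × Bool)).card := by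
    refine Finset.card_le_three.trans_lt ?_
    rw [Finset.card_insert_of_notMem (by simp [hab]), Finset.card_insert_of_notMem (by simp [hab]),
      Finset.card_pair (by simp)]
    decide
  obtain ⟨z, -, hz⟩ := Finset.exists_mem_notMem_of_card_lt_card hcard
  simp only [Finset.mem_insert, Finset.mem_singleton, not_or] at hz
  exact ⟨z, hz⟩

theorem isCyclic_of_subsingleton [Subsingleton α] : IsCyclic (FreeGroup α) := by
  rcases isEmpty_or_nonempty α with hα | ⟨⟨a⟩⟩
  · infer_instance
  · have := uniqueOfSubsingleton a
    infer_instance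

section DecidableEq

variable [DecidableEq α]

theorem reduce_cons_eq_or (x : α × Bool) (l : List (α × Bool)) :
    reduce (x :: l) = x :: reduce l ∨ reduce l = (x.1, !x.2) :: reduce (x :: l) := by
  rw [reduce.cons]
  rcases reduce l with _ | ⟨y, t⟩
  · exact Or.inl rfl
  · dsimp only
    split_ifs with h
    · right
      obtain ⟨h1, h2⟩ := h
      simp [h1, h2]
    · exact Or.inl rfl

theorem exists_mk_eq_mk_take_of_prefix_reduce {l p : List (α × Bool)} (hp : p <+: reduce l) :
    ∃ n, mk p = mk (l.take n) := by
  induction l generalizing p with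
  | nil => exact ⟨0, by rw [List.prefix_nil.mp hp]; rfl⟩
  | cons x l ih =>
    rcases reduce_cons_eq_or x l with h | h
    · rw [h] at hp
      rcases List.prefix_cons_iff.mp hp with rfl | ⟨p', rfl, hp'⟩
      · exact ⟨0, rfl⟩
      · obtain ⟨n, hn⟩ := ih hp'
        refine ⟨n + 1, ?_⟩
        rw [List.take_succ_cons, ← List.singleton_append, ← mul_mk, hn, mul_mk]
        rfl
    · obtain ⟨n, hn⟩ := ih (p := (x.1, !x.2) :: p) (h ▸ List.cons_prefix_cons.mpr ⟨rfl, hp⟩)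
      have hcancel : mk [x] * mk ((x.1, !x.2) :: p) = mk p := by
        rw [mul_mk]; exact Quot.sound Red.Step.cons_not
      exact ⟨n + 1, by rw [← hcancel, hn, mul_mk]; rfl⟩

theorem list_prod_eq_mk_flatMap_toWord (l : List (FreeGroup α)) :
    l.prod = mk (l.flatMap toWord) := by
  induction l with
  | nil => rfl
  | cons s l ih => rw [List.prod_cons, ih, List.flatMap_cons, ← mul_mk, mk_toWord]

theorem exists_mk_take_flatMap_toWord_eq (l : List (FreeGroup α)) (n : ℕ) :
    ∃ j r, (r = [] ∨ ∃ s ∈ l, r <+: s.toWord) ∧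
      mk ((l.flatMap toWord).take n) = (l.take j).prod * mk r := by
  induction l generalizing n with
  | nil => exact ⟨0, [], Or.inl rfl, by simp⟩
  | cons s l ih =>
    rw [List.flatMap_cons, List.take_append]
    by_cases hn : n ≤ s.toWord.length
    · refine ⟨0, s.toWord.take n, Or.inr ⟨s, List.mem_cons_self, List.take_prefix _ _⟩, ?_⟩
      simp [Nat.sub_eq_zero_of_le hn]
    · obtain ⟨j, r, hr, hjr⟩ := ih (n - s.toWord.length)
      refine ⟨j + 1, r, hr.imp_right fun ⟨t, ht, hrt⟩ => ⟨t, List.mem_cons_of_mem _ ht, hrt⟩, ?_⟩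
      rw [List.take_of_length_le (by omega), ← mul_mk, mk_toWord, hjr, List.take_succ_cons,
        List.prod_cons, mul_assoc]

theorem exists_mem_closure_mul_mk_of_prefix_toWord {S : Set (FreeGroup α)} {w : FreeGroup α}
    (hw : w ∈ Subgroup.closure S) {p : List (α × Bool)} (hp : p <+: w.toWord) :
    ∃ c ∈ Subgroup.closure S, ∃ r, (r = [] ∨ ∃ s ∈ S ∪ S⁻¹, r <+: s.toWord) ∧ mk p = c * mk r := by
  rw [← SetLike.mem_coe, ← Subgroup.coe_toSubmonoid, Subgroup.closure_toSubmonoid] at hw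
  obtain ⟨l, hlS, rfl⟩ := Submonoid.exists_list_of_mem_closure hw
  rw [list_prod_eq_mk_flatMap_toWord, toWord_mk] at hp
  obtain ⟨n, hn⟩ := exists_mk_eq_mk_take_of_prefix_reduce hp
  obtain ⟨j, r, hr, hjr⟩ := exists_mk_take_flatMap_toWord_eq l n
  refine ⟨(l.take j).prod, ?_, r, hr.imp_right fun ⟨s, hs, hrs⟩ => ⟨s, hlS s hs, hrs⟩, hn.trans hjr⟩
  refine list_prod_mem fun s hs => ?_
  rw [← Subgroup.mem_toSubmonoid, Subgroup.closure_toSubmonoid]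
  exact Submonoid.subset_closure (hlS s (List.mem_of_mem_take hs))

theorem finiteIndex_closure_of_forall_exists_prefix_toWord {S : Set (FreeGroup α)}
    (hS : S.Finite) (h : ∀ g : FreeGroup α, ∃ w ∈ Subgroup.closure S, g.toWord <+: w.toWord) :
    (Subgroup.closure S).FiniteIndex := by
  set P := insert [] (⋃ s ∈ S ∪ S⁻¹, {r | r <+: s.toWord})
  have hP : P.Finite :=
    ((hS.union hS.inv).biUnion fun s _ => List.finite_setOf_prefix s.toWord).insert _
  have hcover : ∀ q : FreeGroup α ⧸ Subgroup.closure S,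
      q ∈ (fun r => ((mk r)⁻¹ : FreeGroup α) : _ → FreeGroup α ⧸ Subgroup.closure S) '' P := by
    refine fun q => QuotientGroup.induction_on q fun g => ?_
    obtain ⟨w, hw, hgw⟩ := h g⁻¹
    obtain ⟨c, hc, r, hr, hg⟩ := exists_mem_closure_mul_mk_of_prefix_toWord hw hgw
    refine ⟨r, ?_, ?_⟩
    · rcases hr with rfl | ⟨s, hs, hrs⟩
      · exact Set.mem_insert _ _
      · exact Set.mem_insert_of_mem _ (Set.mem_biUnion hs hrs)
    · rw [mk_toWord, inv_eq_iff_eq_inv] at hg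
      rw [hg, mul_inv_rev]
      exact (QuotientGroup.mk_mul_of_mem _ (inv_mem hc)).symm
  have : Finite (FreeGroup α ⧸ Subgroup.closure S) :=
    Set.finite_univ_iff.mp ((hP.image _).subset fun q _ => hcover q)
  exact Subgroup.finiteIndex_of_finite_quotient

theorem toWord_mul_mul_inv {h u : FreeGroup α} (hu : u ≠ 1)
    (hhead : ∀ x ∈ h.toWord.getLast?, ∀ y ∈ u.toWord.head?, y ≠ (x.1, !x.2))
    (hlast : ∀ x ∈ h.toWord.getLast?, ∀ y ∈ u.toWord.getLast?, y ≠ x) :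
    (h * u * h⁻¹).toWord = h.toWord ++ u.toWord ++ h⁻¹.toWord := by
  have hred : IsReduced (h.toWord ++ u.toWord ++ h⁻¹.toWord) := by
    rw [IsReduced, List.isChain_append, List.isChain_append]
    refine ⟨⟨isReduced_toWord, isReduced_toWord, fun x hx y hy =>
      fst_eq_imp_snd_eq_iff_ne.mpr (hhead x hx y hy)⟩, isReduced_toWord, fun y hy z hz => ?_⟩
    rw [List.getLast?_append_of_ne_nil _ (toWord_eq_nil_iff.not.mpr hu)] at hy
    rw [toWord_inv, head?_invRev, Option.mem_map] at hz
    obtain ⟨x, hx, rfl⟩ := hz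
    refine fst_eq_imp_snd_eq_iff_ne.mpr fun hyx => hlast x hx y hy ?_
    exact (Prod.ext_iff.mpr (by simpa using hyx)).symm
  rw [← hred.reduce_eq, ← toWord_mk, ← mul_mk, ← mul_mk, mk_toWord, mk_toWord, mk_toWord]

theorem exists_mem_prefix_toWord [Nontrivial α] {N : Subgroup (FreeGroup α)} [N.Normal]
    (hN : N ≠ ⊥) (g : FreeGroup α) : ∃ w ∈ N, g.toWord <+: w.toWord := by
  obtain ⟨u, huN, hu⟩ := N.bot_or_exists_ne_one.resolve_left hN
  have hu' : u.toWord ≠ [] := toWord_eq_nil_iff.not.mpr hu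
  set y₁ := u.toWord.head hu'
  set y₂ := u.toWord.getLast hu'
  set x₀ := g.toWord.getLastD y₁
  have hx₀ : ∀ x ∈ g.toWord.getLast?, x = x₀ := fun x hx => by
    rw [Option.mem_def] at hx; simp [x₀, List.getLastD_eq_getLast?, hx]
  -- `z` must not cancel against the last letter of `g`, nor against either end of `u`
  obtain ⟨z, hz₀, hz₁, hz₂⟩ := exists_ne_ne_ne (x₀.1, !x₀.2) (y₁.1, !y₁.2) y₂
  have hzw : (mk [z]).toWord = [z] := toWord_mk
  set v := mk [z] * u * (mk [z])⁻¹
  have hv : v.toWord = z :: u.toWord ++ [(z.1, !z.2)] := by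
    rw [toWord_mul_mul_inv hu, toWord_inv, hzw]
    · rfl
    · rw [hzw, List.head?_eq_some_head hu']
      rintro x ⟨⟩ y ⟨⟩ hy
      exact hz₁ (by simp [y₁, hy])
    · rw [hzw, List.getLast?_eq_some_getLast hu']
      rintro x ⟨⟩ y ⟨⟩
      exact hz₂.symm
  have hv₁ : v ≠ 1 := fun h => by simp [h] at hv
  refine ⟨g * v * g⁻¹, ‹N.Normal›.conj_mem v (‹N.Normal›.conj_mem u huN _) g, ?_⟩
  rw [toWord_mul_mul_inv hv₁]
  · exact (List.prefix_append _ _).trans (List.prefix_append _ _)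
  · rw [hv]
    rintro x hx y ⟨⟩
    rwa [hx₀ x hx]
  · rw [hv]
    rintro x hx y hy rfl
    rw [List.getLast?_concat, Option.mem_some_iff] at hy
    exact hz₀ (by simp [← hx₀ _ hx, ← hy])

end DecidableEq

theorem eq_bot_or_finiteIndex_of_fg {N : Subgroup (FreeGroup α)} [N.Normal] (hN : N.FG) :
    N = ⊥ ∨ N.FiniteIndex := by
  classical
  refine or_iff_not_imp_left.mpr fun hbot => ?_
  rcases subsingleton_or_nontrivial α with _ | _
  · have := isCyclic_of_subsingleton (α := α)
    exact Subgroup.finiteIndex_of_isCyclic hbot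
  · obtain ⟨S, rfl⟩ := hN
    exact finiteIndex_closure_of_forall_exists_prefix_toWord S.finite_toSet
      (exists_mem_prefix_toWord hbot)

end FreeGroup

/-- A finitely generated normal subgroup of a free group is trivial or of finite
index. -/
theorem fg_normal_subgroup_of_free_group_trivial_or_finite_index
    {F : Type*} [Group F] [IsFreeGroup F] (N : Subgroup F) [N.Normal]
    (hfg : N.FG) : N = ⊥ ∨ N.FiniteIndex := by
  let e := IsFreeGroup.toFreeGroup F
  have : (N.map e.toMonoidHom).Normal := ‹N.Normal›.map _ e.surjective
  refine (FreeGroup.eq_bot_or_finiteIndex_of_fg (hfg.map e.toMonoidHom)).imp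
    (fun h => (Subgroup.map_eq_bot_iff_of_injective _ e.injective).mp h) fun h => ⟨?_⟩
  rw [← Subgroup.index_map_equiv N e]
  exact h.index_ne_zero
end

section
/- Let n be a natural number and let φ be an endomorphism of the free group on generators x₀, …, x_{n-1} such that for every index i, φ(xᵢ) = xᵢ · cᵢ where cᵢ lies in the subgroup generated by the generators x_j with j < i. Then φ is polynomially growing on generators: for every index i there is a polynomial P with natural number coefficients such that for all k ≥ 0, the word length of φ^k(xᵢ) (the length of its reduced word) is at most P(k). -/
open FreeGroup

private lemma closure_norm_bound {n : ℕ} (φ : Monoid.End (FreeGroup (Fin n)))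
    (T : Set (FreeGroup (Fin n))) (B : ℕ → ℕ)
    (hT : ∀ t ∈ T, ∀ k, norm ((φ ^ k) t) ≤ B k) :
    ∀ g ∈ Subgroup.closure T, ∃ m : ℕ, ∀ k, norm ((φ ^ k) g) ≤ m * B k := by
  intro g hg
  induction hg using Subgroup.closure_induction with
  | mem t ht => exact ⟨1, fun k => by simpa using hT t ht k⟩
  | one => exact ⟨0, fun k => by simp⟩
  | mul a b _ _ ha hb =>
      obtain ⟨m₁, h₁⟩ := ha; obtain ⟨m₂, h₂⟩ := hb
      refine ⟨m₁ + m₂, fun k => ?_⟩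
      rw [_root_.map_mul, add_mul]
      exact (FreeGroup.norm_mul_le _ _).trans (Nat.add_le_add (h₁ k) (h₂ k))
  | inv a _ ha =>
      obtain ⟨m, h⟩ := ha
      refine ⟨m, fun k => ?_⟩
      rw [_root_.map_inv, norm_inv_eq]
      exact h k

private lemma main_bound {n : ℕ} (φ : Monoid.End (FreeGroup (Fin n)))
    (hφ : ∀ i : Fin n, ∃ c ∈ Subgroup.closure (FreeGroup.of '' {j : Fin n | j < i}),
      φ (FreeGroup.of i) = FreeGroup.of i * c) :
    ∀ N : ℕ, ∃ C d : ℕ, ∀ i : Fin n, i.val < N → ∀ k,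
      norm ((φ ^ k) (FreeGroup.of i)) ≤ C * (k + 1) ^ d := by
  intro N
  induction N with
  | zero => exact ⟨0, 0, fun i hi => by omega⟩
  | succ N ih =>
      obtain ⟨C, d, hCd⟩ := ih
      by_cases hN : N < n
      · set i : Fin n := ⟨N, hN⟩
        obtain ⟨c, hc, heq⟩ := hφ i
        -- bound on c's images
        obtain ⟨m, hm⟩ := closure_norm_bound φ _ (fun k => C * (k + 1) ^ d)
          (by rintro t ⟨j, hj, rfl⟩ k; exact hCd j hj k) c hc
        -- recursion: norm (φ^k x_i) ≤ 1 + sum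
        have hrec : ∀ k, norm ((φ ^ k) (FreeGroup.of i)) ≤ 1 + k * (m * (C * (k + 1) ^ d)) := by
          intro k
          induction k with
          | zero => simp
          | succ k ihk =>
              have hstep : (φ ^ (k + 1)) (FreeGroup.of i)
                  = (φ ^ k) (FreeGroup.of i) * (φ ^ k) c := by
                rw [pow_succ]
                show (φ ^ k) (φ (FreeGroup.of i)) = _
                rw [heq, _root_.map_mul]
              rw [hstep]
              have h1 : norm ((φ ^ k) (FreeGroup.of i)) ≤ 1 + k * (m * (C * (k + 1 + 1) ^ d)) := by
                refine ihk.trans (Nat.add_le_add_left (Nat.mul_le_mul_left _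
                  (Nat.mul_le_mul_left _ (Nat.mul_le_mul_left _ ?_))) _)
                exact Nat.pow_le_pow_left (by omega) d
              have h2 : norm ((φ ^ k) c) ≤ m * (C * (k + 1 + 1) ^ d) := by
                refine (hm k).trans (Nat.mul_le_mul_left _ (Nat.mul_le_mul_left _ ?_))
                exact Nat.pow_le_pow_left (by omega) d
              calc norm ((φ ^ k) (FreeGroup.of i) * (φ ^ k) c)
                  ≤ norm ((φ ^ k) (FreeGroup.of i)) + norm ((φ ^ k) c) := FreeGroup.norm_mul_le _ _
                _ ≤ (1 + k * (m * (C * (k + 1 + 1) ^ d))) + m * (C * (k + 1 + 1) ^ d) :=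
                    Nat.add_le_add h1 h2
                _ = 1 + (k + 1) * (m * (C * (k + 1 + 1) ^ d)) := by ring
        -- combine: new constants
        refine ⟨max C (1 + m * C) , d + 1, fun j hj k => ?_⟩
        rcases Nat.lt_or_ge j.val N with hjN | hjN
        · refine (hCd j hjN k).trans ?_
          have h1 : (k + 1) ^ d ≤ (k + 1) ^ (d + 1) :=
            Nat.pow_le_pow_right (by omega) (by omega)
          calc C * (k + 1) ^ d ≤ C * (k + 1) ^ (d + 1) := Nat.mul_le_mul_left _ h1
            _ ≤ max C (1 + m * C) * (k + 1) ^ (d + 1) :=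
                Nat.mul_le_mul_right _ (le_max_left _ _)
        · have hji : j = i := Fin.ext (show j.val = N by omega)
          subst hji
          refine (hrec k).trans ?_
          have hone : 1 ≤ (k + 1) ^ (d + 1) := Nat.one_le_pow _ _ (by omega)
          have hk : k * (k + 1) ^ d ≤ (k + 1) ^ (d + 1) := by
            rw [pow_succ, mul_comm]
            exact Nat.mul_le_mul_left _ (by omega)
          calc 1 + k * (m * (C * (k + 1) ^ d))
              = 1 + (m * C) * (k * (k + 1) ^ d) := by ring
            _ ≤ (k + 1) ^ (d + 1) + (m * C) * (k + 1) ^ (d + 1) :=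
                Nat.add_le_add hone (Nat.mul_le_mul_left _ hk)
            _ = (1 + m * C) * (k + 1) ^ (d + 1) := by ring
            _ ≤ max C (1 + m * C) * (k + 1) ^ (d + 1) :=
                Nat.mul_le_mul_right _ (le_max_right _ _)
      · refine ⟨C, d, fun i hi k => hCd i ?_ k⟩
        have := i.isLt; omega

/-- If an endomorphism `φ` of the free group on `x₀, …, x_{n-1}` sends each generator
`xᵢ` to `xᵢ * cᵢ` with `cᵢ` in the subgroup generated by the earlier generators, then
`φ` is polynomially growing on generators: for each `i` there is a polynomial `P`
with natural coefficients bounding the word length of `(φ ^ k) xᵢ` for all `k`. -/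
theorem unipotent_representative_polynomial_growth
    {n : ℕ} (φ : Monoid.End (FreeGroup (Fin n)))
    (hφ : ∀ i : Fin n, ∃ c ∈ Subgroup.closure (FreeGroup.of '' {j : Fin n | j < i}),
      φ (FreeGroup.of i) = FreeGroup.of i * c) :
    ∀ i : Fin n, ∃ P : Polynomial ℕ, ∀ k : ℕ,
      ((φ ^ k) (FreeGroup.of i)).toWord.length ≤ P.eval k := by
  intro i
  obtain ⟨C, d, h⟩ := main_bound φ hφ n
  refine ⟨Polynomial.C C * (Polynomial.X + 1) ^ d, fun k => ?_⟩
  have := h i i.isLt k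
  simpa [FreeGroup.norm] using this
end
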